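/- Let H ∈ (1/2, 1) and let (β^H(t))_{t≥0} be a real-valued fractional Brownian motion with Hurst index H. Then there exists a constant C_H ∈ (0,∞) such that for every λ ∈ (0,∞), every Δt ∈ (0,1) and every n ∈ ℕ, the discrete-time fractional Ornstein–Uhlenbeck approximation 𝒵_n^{H,λ} = Σ_{j=0}^{n−1} e^{−λ(t_n−t_j)} (β^H(t_{j+1}) − β^H(t_j)), where t_j = jΔt, satisfies E[|𝒵_n^{H,λ}|²] ≤ C_H λ^{−2H}. -/

import Mathlib

open MeasureTheory

/-- The discrete-time approximation of the fractional Ornstein–Uhlenbeck process on the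
uniform grid `t_j = j Δt`:
`𝒵_n^{H,λ} = Σ_{j=0}^{n-1} exp(-λ(t_n - t_j)) (β(t_{j+1}) - β(t_j))`. -/
noncomputable def fracOUdisc {Ω : Type*} (β : ℝ → Ω → ℝ) (lam Δt : ℝ) (n : ℕ) (ω : Ω) : ℝ :=
  ∑ j ∈ Finset.range n,
    Real.exp (-(lam * ((n : ℝ) * Δt - (j : ℝ) * Δt)))
      * (β (((j : ℝ) + 1) * Δt) ω - β ((j : ℝ) * Δt) ω)

/-!
Summing by parts, `𝒵_n = Σ_j c_j (β(t_n) - β(t_j))` with nonnegative weights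
`c_j = e^{-λ(t_n - t_j)} - e^{-λ(t_n - t_{j-1})}` (and `c_0 = e^{-λ t_n}`), while the covariance
gives `‖β(t_n) - β(t_j)‖_{L²} = (t_n - t_j)^H`. The triangle inequality in `L²` then yields
`‖𝒵_n‖_{L²} ≤ Σ_j c_j (t_n - t_j)^H`, and Hölder's inequality bounds this by
`(Σ_j c_j)^{1-H} (Σ_j c_j (t_n - t_j))^H`. The first sum telescopes to `e^{-λΔt} ≤ 1`. Summing by
parts backwards, the second is `Δt Σ_j e^{-λ(t_n - t_j)}`, which is at most `1/λ` because
`x e^{-x} ≤ 1 - e^{-x}` makes `λΔt` times each term smaller than the next increment of the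
weights. So `E[𝒵_n²] ≤ λ^{-2H}`, i.e. `C_H = 1`.
-/

open Finset

section SquareIntegrable

variable {Ω : Type*} [MeasurableSpace Ω] {μ : Measure Ω}

theorem integral_mul_le_sqrt_integral_sq_mul_sqrt {X Y : Ω → ℝ} (hX : MemLp X 2 μ)
    (hY : MemLp Y 2 μ) :
    ∫ ω, X ω * Y ω ∂μ ≤ √(∫ ω, X ω ^ 2 ∂μ) * √(∫ ω, Y ω ^ 2 ∂μ) := by
  have holder := integral_mul_le_Lp_mul_Lq_of_nonneg Real.HolderConjugate.two_two
    (ae_of_all _ fun _ => abs_nonneg _) (ae_of_all _ fun _ => abs_nonneg _)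
    (by rw [ENNReal.ofReal_ofNat]; exact hX.abs) (by rw [ENNReal.ofReal_ofNat]; exact hY.abs)
  simp only [Real.rpow_two, sq_abs, ← Real.sqrt_eq_rpow] at holder
  refine le_trans (integral_mono (hX.integrable_mul hY) ?_ fun ω => ?_) holder
  · exact hX.abs.integrable_mul hY.abs
  · rw [← abs_mul]; exact le_abs_self _

theorem integral_sq_sum_le_sq_sum_mul_sqrt {ι : Type*} (s : Finset ι) {c : ι → ℝ}
    (hc : ∀ i ∈ s, 0 ≤ c i) {X : ι → Ω → ℝ} (hX : ∀ i ∈ s, MemLp (X i) 2 μ) :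
    ∫ ω, (∑ i ∈ s, c i * X i ω) ^ 2 ∂μ ≤ (∑ i ∈ s, c i * √(∫ ω, X i ω ^ 2 ∂μ)) ^ 2 := by
  have hint : ∀ i ∈ s, ∀ j ∈ s, Integrable (fun ω => c i * c j * (X i ω * X j ω)) μ :=
    fun i hi j hj => ((hX i hi).integrable_mul (hX j hj)).const_mul _
  have expand : ∀ (a : ι → ℝ), (∑ i ∈ s, c i * a i) ^ 2
      = ∑ i ∈ s, ∑ j ∈ s, c i * c j * (a i * a j) := fun a => by
    rw [sq, sum_mul_sum]
    exact sum_congr rfl fun i _ => sum_congr rfl fun j _ => by ring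
  simp_rw [expand]
  rw [integral_finsetSum _ fun i hi => integrable_finsetSum _ fun j hj => hint i hi j hj]
  refine sum_le_sum fun i hi => ?_
  rw [integral_finsetSum _ fun j hj => hint i hi j hj]
  refine sum_le_sum fun j hj => ?_
  rw [integral_const_mul]
  exact mul_le_mul_of_nonneg_left (integral_mul_le_sqrt_integral_sq_mul_sqrt (hX i hi) (hX j hj))
    (mul_nonneg (hc i hi) (hc j hj))

end SquareIntegrable

theorem sum_range_mul_sub_eq_sum_sub_mul_sub {R : Type*} [CommRing R] (a B : ℕ → R)
    (ha : a 0 = 0) (n : ℕ) :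
    ∑ j ∈ range n, a (j + 1) * (B (j + 1) - B j)
      = ∑ j ∈ range n, (a (j + 1) - a j) * (B n - B j) := by
  induction n with
  | zero => simp
  | succ n ih =>
    have shift : ∑ j ∈ range n, (a (j + 1) - a j) * (B (n + 1) - B j)
        = ∑ j ∈ range n, (a (j + 1) - a j) * (B n - B j) + a n * (B (n + 1) - B n) := by
      rw [← sub_zero (a n), ← ha, ← sum_range_sub, sum_mul, ← sum_add_distrib]
      exact sum_congr rfl fun j _ => by ring
    rw [sum_range_succ, ih, sum_range_succ, shift]
    ring

theorem sum_mul_rpow_le_of_le_one {ι : Type*} (s : Finset ι) {w u : ι → ℝ}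
    (hw : ∀ i ∈ s, 0 ≤ w i) (hu : ∀ i ∈ s, 0 ≤ u i) {H : ℝ} (hH0 : 0 < H) (hH1 : H ≤ 1) :
    ∑ i ∈ s, w i * u i ^ H ≤ (∑ i ∈ s, w i) ^ (1 - H) * (∑ i ∈ s, w i * u i) ^ H := by
  have holder := Real.inner_le_weight_mul_Lp_of_nonneg (univ : Finset s) (p := H⁻¹)
    ((one_le_inv₀ hH0).2 hH1) (fun i => w i) (fun i => u i ^ H) (fun i => hw i i.2)
    (fun i => Real.rpow_nonneg (hu i i.2) _)
  simp only [inv_inv, Real.rpow_rpow_inv (hu _ (Subtype.prop _)) hH0.ne'] at holder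
  simpa only [sum_coe_sort s (fun i => w i * u i ^ H), sum_coe_sort s w,
    sum_coe_sort s (fun i => w i * u i)] using holder

theorem mul_exp_sub_le_exp_sub_exp (x y : ℝ) :
    x * Real.exp (y - x) ≤ Real.exp y - Real.exp (y - x) := by
  have h := mul_le_mul_of_nonneg_left (Real.add_one_le_exp x) (Real.exp_pos (y - x)).le
  rw [← Real.exp_add, sub_add_cancel] at h
  linarith

theorem integral_sq_sub_eq_of_covariance {Ω : Type*} [MeasurableSpace Ω] {μ : Measure Ω}
    {H : ℝ} (hH : 0 < H) {β : ℝ → Ω → ℝ} (hL2 : ∀ t : ℝ, 0 ≤ t → MemLp (β t) 2 μ)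
    (hcov : ∀ t s : ℝ, 0 ≤ t → 0 ≤ s →
      ∫ ω, β t ω * β s ω ∂μ = (t ^ (2*H) + s ^ (2*H) - |t - s| ^ (2*H)) / 2)
    {t s : ℝ} (ht : 0 ≤ t) (hs : 0 ≤ s) :
    ∫ ω, (β t ω - β s ω) ^ 2 ∂μ = |t - s| ^ (2*H) := by
  have hint : ∀ u v, 0 ≤ u → 0 ≤ v → Integrable (fun ω => β u ω * β v ω) μ :=
    fun u v hu hv => (hL2 u hu).integrable_mul (hL2 v hv)
  have expand : ∀ ω, (β t ω - β s ω) ^ 2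
      = β t ω * β t ω - 2 * (β t ω * β s ω) + β s ω * β s ω := fun ω => by ring
  simp_rw [expand]
  rw [integral_add (f := fun ω => β t ω * β t ω - 2 * (β t ω * β s ω))
      ((hint t t ht ht).sub ((hint t s ht hs).const_mul 2)) (hint s s hs hs),
    integral_sub (hint t t ht ht) ((hint t s ht hs).const_mul 2), integral_const_mul,
    hcov t t ht ht, hcov t s ht hs, hcov s s hs hs]
  simp only [sub_self, abs_zero, Real.zero_rpow (by positivity : 2 * H ≠ 0)]
  ring

theorem sqrt_integral_sq_sub_eq_of_covariance {Ω : Type*} [MeasurableSpace Ω]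
    {μ : Measure Ω} {H : ℝ} (hH : 0 < H) {β : ℝ → Ω → ℝ}
    (hL2 : ∀ t : ℝ, 0 ≤ t → MemLp (β t) 2 μ)
    (hcov : ∀ t s : ℝ, 0 ≤ t → 0 ≤ s →
      ∫ ω, β t ω * β s ω ∂μ = (t ^ (2*H) + s ^ (2*H) - |t - s| ^ (2*H)) / 2)
    {t s : ℝ} (hs : 0 ≤ s) (hst : s ≤ t) :
    √(∫ ω, (β t ω - β s ω) ^ 2 ∂μ) = (t - s) ^ H := by
  have hts : 0 ≤ t - s := sub_nonneg.2 hst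
  rw [integral_sq_sub_eq_of_covariance hH hL2 hcov (hs.trans hst) hs, abs_of_nonneg hts,
    mul_comm 2 H, Real.rpow_mul hts, Real.rpow_two, Real.sqrt_sq (Real.rpow_nonneg hts H)]

/-- The weight `e^{-λ(t_n - t_j)}` of the `j`-th increment in `fracOUdisc`, with the index
shifted by one so that the sequence starts at `0`, as summation by parts requires. -/
noncomputable def fracOUweight (lam Δt : ℝ) (n j : ℕ) : ℝ :=
  if j = 0 then 0 else Real.exp (-(lam * ((n : ℝ) * Δt - ((j : ℝ) - 1) * Δt)))

section DiscreteOU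

variable {lam Δt : ℝ} {n : ℕ}

theorem fracOUweight_zero : fracOUweight lam Δt n 0 = 0 := rfl

theorem fracOUweight_succ (j : ℕ) :
    fracOUweight lam Δt n (j + 1) = Real.exp (-(lam * ((n : ℝ) * Δt - (j : ℝ) * Δt))) := by
  simp [fracOUweight]

theorem fracOUdisc_eq_sum_sub_mul_sub {Ω : Type*} (β : ℝ → Ω → ℝ) (ω : Ω) :
    fracOUdisc β lam Δt n ω = ∑ j ∈ range n,
      (fracOUweight lam Δt n (j + 1) - fracOUweight lam Δt n j)
        * (β ((n : ℝ) * Δt) ω - β ((j : ℝ) * Δt) ω) := by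
  rw [← sum_range_mul_sub_eq_sum_sub_mul_sub _ (fun j : ℕ => β ((j : ℝ) * Δt) ω)
    fracOUweight_zero]
  simp [fracOUdisc, fracOUweight_succ]

theorem fracOUweight_le_succ (hlam : 0 ≤ lam) (hΔt : 0 ≤ Δt) (j : ℕ) :
    fracOUweight lam Δt n j ≤ fracOUweight lam Δt n (j + 1) := by
  rcases j with _ | j
  · rw [fracOUweight_zero]; exact (Real.exp_pos _).le
  · rw [fracOUweight_succ, fracOUweight_succ]
    gcongr
    linarith

theorem sum_fracOUweight_sub_le_one (hlam : 0 ≤ lam) (hΔt : 0 ≤ Δt) :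
    ∑ j ∈ range n, (fracOUweight lam Δt n (j + 1) - fracOUweight lam Δt n j) ≤ 1 := by
  rw [sum_range_sub, fracOUweight_zero, sub_zero]
  rcases n with _ | n
  · exact zero_le_one
  · rw [fracOUweight_succ, Real.exp_le_one_iff]
    push_cast
    nlinarith

theorem mul_sum_fracOUweight_sub_mul_le_one :
    lam * ∑ j ∈ range n, (fracOUweight lam Δt n (j + 1) - fracOUweight lam Δt n j)
      * ((n : ℝ) * Δt - (j : ℝ) * Δt) ≤ 1 := by
  rw [← sum_range_mul_sub_eq_sum_sub_mul_sub _ (fun j : ℕ => (j : ℝ) * Δt) fracOUweight_zero,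
    mul_sum]
  have step : ∀ j ∈ range n, lam * (fracOUweight lam Δt n (j + 1)
      * (((j + 1 : ℕ) : ℝ) * Δt - (j : ℝ) * Δt))
      ≤ fracOUweight lam Δt n (j + 1 + 1) - fracOUweight lam Δt n (j + 1) := fun j _ => by
    have h := mul_exp_sub_le_exp_sub_exp (lam * Δt) (-(lam * ((n : ℝ) * Δt - (j + 1) * Δt)))
    rw [show -(lam * ((n : ℝ) * Δt - (j + 1) * Δt)) - lam * Δt = -(lam * (n * Δt - j * Δt)) by
      ring] at h
    rw [fracOUweight_succ, fracOUweight_succ]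
    push_cast
    linear_combination h
  calc _ ≤ _ := sum_le_sum step
    _ = fracOUweight lam Δt n (n + 1) - fracOUweight lam Δt n 1 :=
        sum_range_sub (fun j => fracOUweight lam Δt n (j + 1)) n
    _ ≤ fracOUweight lam Δt n (n + 1) :=
        sub_le_self _ (by rw [fracOUweight_succ]; positivity)
    _ = 1 := by rw [fracOUweight_succ, sub_self, mul_zero, neg_zero, Real.exp_zero]

theorem sum_fracOUweight_sub_mul_rpow_le {H : ℝ} (hH0 : 0 < H) (hH1 : H ≤ 1) (hlam : 0 < lam)
    (hΔt : 0 ≤ Δt) :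
    ∑ j ∈ range n, (fracOUweight lam Δt n (j + 1) - fracOUweight lam Δt n j)
      * ((n : ℝ) * Δt - (j : ℝ) * Δt) ^ H ≤ lam ^ (-H) := by
  have hw : ∀ j ∈ range n, 0 ≤ fracOUweight lam Δt n (j + 1) - fracOUweight lam Δt n j :=
    fun j _ => sub_nonneg.2 (fracOUweight_le_succ hlam.le hΔt j)
  have hu : ∀ j ∈ range n, 0 ≤ (n : ℝ) * Δt - (j : ℝ) * Δt := fun j hj => by
    have : (j : ℝ) ≤ n := by exact_mod_cast (mem_range.1 hj).le
    nlinarith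
  have hsum_mul : ∑ j ∈ range n, (fracOUweight lam Δt n (j + 1) - fracOUweight lam Δt n j)
      * ((n : ℝ) * Δt - (j : ℝ) * Δt) ≤ lam⁻¹ := by
    rw [← one_div, le_div_iff₀' hlam]
    exact mul_sum_fracOUweight_sub_mul_le_one
  calc _ ≤ _ := sum_mul_rpow_le_of_le_one (range n) hw hu hH0 hH1
    _ ≤ 1 * lam⁻¹ ^ H :=
        mul_le_mul
          (Real.rpow_le_one (sum_nonneg hw) (sum_fracOUweight_sub_le_one hlam.le hΔt)
            (by linarith))
          (Real.rpow_le_rpow (sum_nonneg fun j hj => mul_nonneg (hw j hj) (hu j hj)) hsum_mul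
            hH0.le)
          (Real.rpow_nonneg (sum_nonneg fun j hj => mul_nonneg (hw j hj) (hu j hj)) _)
          zero_le_one
    _ = lam ^ (-H) := by rw [one_mul, Real.inv_rpow hlam.le, Real.rpow_neg hlam.le]

end DiscreteOU

theorem stmt11_general
    {Ω : Type*} [MeasurableSpace Ω] (μ : Measure Ω)
    (H : ℝ) (hH : H ∈ Set.Ioo (1/2 : ℝ) 1)
    (β : ℝ → Ω → ℝ)
    (hL2 : ∀ t : ℝ, 0 ≤ t → MemLp (β t) 2 μ)
    (hcov : ∀ t s : ℝ, 0 ≤ t → 0 ≤ s →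
      ∫ ω, β t ω * β s ω ∂μ = (t ^ (2*H) + s ^ (2*H) - |t - s| ^ (2*H)) / 2) :
    ∃ C : ℝ, 0 < C ∧ ∀ lam : ℝ, 0 < lam → ∀ Δt ∈ Set.Ioo (0:ℝ) 1, ∀ n : ℕ,
      ∫ ω, (fracOUdisc β lam Δt n ω) ^ 2 ∂μ ≤ C * lam ^ (-(2*H)) := by
  obtain ⟨hH0, hH1⟩ : 0 < H ∧ H ≤ 1 := ⟨by linarith [hH.1], hH.2.le⟩
  refine ⟨1, one_pos, fun lam hlam Δt hΔt n => ?_⟩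
  have hΔt0 : 0 ≤ Δt := hΔt.1.le
  have hT : 0 ≤ (n : ℝ) * Δt := by positivity
  have hweight : ∀ j, 0 ≤ fracOUweight lam Δt n (j + 1) - fracOUweight lam Δt n j :=
    fun j => sub_nonneg.2 (fracOUweight_le_succ hlam.le hΔt0 j)
  have hincrement : ∀ j ∈ range n,
      √(∫ ω, (β ((n : ℝ) * Δt) ω - β ((j : ℝ) * Δt) ω) ^ 2 ∂μ)
        = ((n : ℝ) * Δt - (j : ℝ) * Δt) ^ H := fun j hj =>
    sqrt_integral_sq_sub_eq_of_covariance hH0 hL2 hcov (by positivity)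
      (mul_le_mul_of_nonneg_right (by exact_mod_cast (mem_range.1 hj).le) hΔt0)
  calc ∫ ω, (fracOUdisc β lam Δt n ω) ^ 2 ∂μ
      ≤ (∑ j ∈ range n, (fracOUweight lam Δt n (j + 1) - fracOUweight lam Δt n j)
          * √(∫ ω, (β ((n : ℝ) * Δt) ω - β ((j : ℝ) * Δt) ω) ^ 2 ∂μ)) ^ 2 := by
        simp_rw [fracOUdisc_eq_sum_sub_mul_sub]
        exact integral_sq_sum_le_sq_sum_mul_sqrt _ (fun j _ => hweight j)
          (fun j _ => (hL2 _ hT).sub (hL2 _ (by positivity)))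
    _ ≤ (lam ^ (-H)) ^ 2 := by
        refine pow_le_pow_left₀ (sum_nonneg fun j _ => mul_nonneg (hweight j) (Real.sqrt_nonneg _))
          ?_ 2
        rw [sum_congr rfl fun j hj => by rw [hincrement j hj]]
        exact sum_fracOUweight_sub_mul_rpow_le hH0 hH1 hlam hΔt0
    _ = 1 * lam ^ (-(2*H)) := by
        rw [one_mul, ← Real.rpow_natCast, ← Real.rpow_mul hlam.le]
        ring_nf

/-- Moment bound for the discrete-time fractional Ornstein–Uhlenbeck approximation, case
`H ∈ (1/2,1)`: there is `C_H ∈ (0,∞)` such that `E[|𝒵_n^{H,λ}|²] ≤ C_H λ^{-2H}` for all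
`λ > 0`, `Δt ∈ (0,1)` and `n ∈ ℕ`. -/
theorem stmt11
    {Ω : Type*} [MeasurableSpace Ω] (μ : Measure Ω) [IsProbabilityMeasure μ]
    (H : ℝ) (hH : H ∈ Set.Ioo (1/2 : ℝ) 1)
    (β : ℝ → Ω → ℝ)
    (hmeas : ∀ t : ℝ, AEStronglyMeasurable (β t) μ)
    (hpath : ∀ᵐ ω ∂μ, ContinuousOn (fun t => β t ω) (Set.Ici 0) ∧ β 0 ω = 0)
    (hL2 : ∀ t : ℝ, 0 ≤ t → MemLp (β t) 2 μ)
    (hmean : ∀ t : ℝ, 0 ≤ t → ∫ ω, β t ω ∂μ = 0)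
    (hcov : ∀ t s : ℝ, 0 ≤ t → 0 ≤ s →
      ∫ ω, β t ω * β s ω ∂μ = (t ^ (2*H) + s ^ (2*H) - |t - s| ^ (2*H)) / 2) :
    ∃ C : ℝ, 0 < C ∧ ∀ lam : ℝ, 0 < lam → ∀ Δt ∈ Set.Ioo (0:ℝ) 1, ∀ n : ℕ,
      ∫ ω, (fracOUdisc β lam Δt n ω) ^ 2 ∂μ ≤ C * lam ^ (-(2*H)) :=
  stmt11_general μ H hH β hL2 hcov
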